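/- arXiv:0802.3640 — 3 statements merged into one kernel-verified Lean document; each statement's English description precedes it below -/
import Mathlib

section
/- Let f : Z → ℝ ∪ {+∞} be proper, convex and norm lower semicontinuous, and assume inf_{w ∈ Z} ( f_z(w) + h(w) ) = 0 for every z ∈ Z. Then M_f is maximal monotone in Z. In particular, every strongly representable operator is maximal monotone. -/
open NormedSpace

noncomputable section

/-- The coupling `c(x, x*) := ⟨x, x*⟩` on `Z := X × X*`. -/
def coup (X : Type*) [NormedAddCommGroup X] [NormedSpace ℝ X]
    (z : X × StrongDual ℝ X) : ℝ := z.2 z.1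

/-- The coupling `c(u*, u**) := ⟨u*, u**⟩` on `Z* := X* × X**`. -/
def coupS (X : Type*) [NormedAddCommGroup X] [NormedSpace ℝ X]
    (p : StrongDual ℝ X × StrongDual ℝ (StrongDual ℝ X)) : ℝ := p.2 p.1

/-- The Fenchel conjugate `f* : X* × X** → ℝ ∪ {±∞}` of `f : Z → ℝ ∪ {+∞}`. -/
def conjF (X : Type*) [NormedAddCommGroup X] [NormedSpace ℝ X]
    (f : X × StrongDual ℝ X → EReal) (p : StrongDual ℝ X × StrongDual ℝ (StrongDual ℝ X)) : EReal :=
  ⨆ z : X × StrongDual ℝ X, (((p.1 z.1 + p.2 z.2 : ℝ) : EReal) - f z)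

/-- `h(x, x*) := ‖x‖²/2 + ‖x*‖²/2`. -/
def hfun (X : Type*) [NormedAddCommGroup X] [NormedSpace ℝ X]
    (z : X × StrongDual ℝ X) : ℝ := ‖z.1‖ ^ 2 / 2 + ‖z.2‖ ^ 2 / 2

/-- `M_f := {z | f z = c z}`. -/
def Mset (X : Type*) [NormedAddCommGroup X] [NormedSpace ℝ X]
    (f : X × StrongDual ℝ X → EReal) : Set (X × StrongDual ℝ X) :=
  {z | f z = ((coup X z : ℝ) : EReal)}

/-- `M ⊆ Z` is monotone. -/
def IsMono (X : Type*) [NormedAddCommGroup X] [NormedSpace ℝ X]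
    (M : Set (X × StrongDual ℝ X)) : Prop :=
  ∀ z ∈ M, ∀ w ∈ M, 0 ≤ (z.2 - w.2) (z.1 - w.1)

/-- `M ⊆ Z` is maximal monotone. -/
def IsMaxMono (X : Type*) [NormedAddCommGroup X] [NormedSpace ℝ X]
    (M : Set (X × StrongDual ℝ X)) : Prop :=
  IsMono X M ∧ ∀ N, IsMono X N → M ⊆ N → N = M

/-- `f` is a member of `G_s(Z)`: proper, convex, `f ≥ c`, `f* ≥ c` on `X* × X**`, norm-lsc. -/
def memGs (X : Type*) [NormedAddCommGroup X] [NormedSpace ℝ X]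
    (f : X × StrongDual ℝ X → EReal) : Prop :=
  (∀ z, f z ≠ ⊥) ∧ (∃ z, f z ≠ ⊤) ∧
    Convex ℝ {p : (X × StrongDual ℝ X) × ℝ | f p.1 ≤ (p.2 : EReal)} ∧
    (∀ z, ((coup X z : ℝ) : EReal) ≤ f z) ∧
    (∀ p, ((coupS X p : ℝ) : EReal) ≤ conjF X f p) ∧
    LowerSemicontinuous f

/-!
The hypothesis at `w = 0` gives `f ≥ c`, so midpoint convexity of `f` on `M_f` yields
monotonicity through `c(z - w) = 2 c(z) + 2 c(w) - 4 c((z + w) / 2)`.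

For maximality, let `f(z) ≤ c(z) + ε`. A `δ`-minimiser `w` of `f_z + h` has
`f(z + w) ≤ c(z + w) + δ`, and comparing `f` with `c` at the midpoint of `z` and `z + w` gives
`h(w) ≤ 2(ε + δ)`. Iterating with `δ = ε / 4` yields a Cauchy sequence whose limit lies in `M_f`
by lower semicontinuity, at distance `O(√ε)` from `z`. If `z₀` is monotonically related to `M_f`,
run this from `z₀ + w` for a `δ`-minimiser `w` of `f_{z₀} + h`: the point `z' ∈ M_f` obtained
satisfies `c(z' - z₀) ≥ 0`, which together with `c(w) + h(w) < δ` forces `‖w‖ = O(√δ)`. Hence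
`z₀` lies in the closure of `M_f`, and lower semicontinuity puts it in `M_f`.

For `g ∈ G_s(Z)`, `g_z + h ≥ 0` follows from `g ≥ c`. If `g_z + h ≥ m > 0`, Hahn–Banach separates
the epigraph of `g_z` from the open convex set `{(w, t) | t + h(w) < m}`, and the normalised
separating functional is a pair `(q₁, q₂) ∈ X* × X**` with a constant `β`. Testing it at
`w = (x, -q₁)`, where `x` almost attains `‖q₁‖`, gives `q₂(q₁) > -β`, while `g* ≥ c` at
`(x₀* - q₁, x₀ - q₂)`, for `z = (x₀, x₀*)`, gives `q₂(q₁) ≤ -β`.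
-/

open Set Filter Topology

lemma apply_le_opNorm_mul_norm {V : Type*} [NormedAddCommGroup V] [NormedSpace ℝ V]
    (q : StrongDual ℝ V) (x : V) : q x ≤ ‖q‖ * ‖x‖ :=
  (le_abs_self _).trans (Real.norm_eq_abs (q x) ▸ q.le_opNorm x)

lemma convexOn_half_sq_norm {V : Type*} [NormedAddCommGroup V] [NormedSpace ℝ V] :
    ConvexOn ℝ univ fun x : V => ‖x‖ ^ 2 / 2 :=
  (((convexOn_norm convex_univ).pow (fun _ _ => norm_nonneg _) 2).smul
    (by norm_num : (0 : ℝ) ≤ 1 / 2)).congr fun x _ => by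
      simp only [smul_eq_mul, Pi.pow_apply]
      ring

section Coupling

variable {X : Type*} [NormedAddCommGroup X] [NormedSpace ℝ X]

lemma coup_add (z w : X × StrongDual ℝ X) :
    coup X (z + w) = coup X z + z.2 w.1 + w.2 z.1 + coup X w := by
  simp only [coup, Prod.fst_add, Prod.snd_add, map_add, add_apply]
  ring

lemma coup_add_sub_coup (z w : X × StrongDual ℝ X) :
    coup X (z + w) - coup X w = coup X z + z.2 w.1 + w.2 z.1 := by
  rw [coup_add]
  ring

lemma coup_smul (a : ℝ) (z : X × StrongDual ℝ X) : coup X (a • z) = a ^ 2 * coup X z := by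
  simp only [coup, Prod.smul_fst, Prod.smul_snd, map_smul, smul_apply, smul_eq_mul]
  ring

lemma coup_neg (z : X × StrongDual ℝ X) : coup X (-z) = coup X z := by
  simp [coup]

lemma coup_add_add_coup_sub (z w : X × StrongDual ℝ X) :
    coup X (z + w) + coup X (z - w) = 2 * (coup X z + coup X w) := by
  rw [sub_eq_add_neg, coup_add, coup_add, coup_neg]
  simp only [Prod.fst_neg, Prod.snd_neg, map_neg, neg_apply]
  ring

lemma abs_coup_le (z : X × StrongDual ℝ X) : |coup X z| ≤ ‖z.1‖ * ‖z.2‖ := by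
  rw [mul_comm, ← Real.norm_eq_abs]
  exact z.2.le_opNorm z.1

lemma abs_coup_le_hfun (z : X × StrongDual ℝ X) : |coup X z| ≤ hfun X z :=
  (abs_coup_le z).trans (by unfold hfun; nlinarith [sq_nonneg (‖z.1‖ - ‖z.2‖)])

lemma sq_norm_le_two_mul_hfun (z : X × StrongDual ℝ X) : ‖z‖ ^ 2 ≤ 2 * hfun X z := by
  rw [Prod.norm_def, hfun]
  rcases max_cases ‖z.1‖ ‖z.2‖ with ⟨h, -⟩ | ⟨h, -⟩ <;> rw [h] <;>
    nlinarith [sq_nonneg ‖z.1‖, sq_nonneg ‖z.2‖]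

lemma coup_add_le (v e : X × StrongDual ℝ X) :
    coup X (v + e) ≤ coup X v + ‖e‖ * (2 * ‖v‖ + ‖e‖) := by
  have h₁ : v.2 e.1 ≤ ‖v‖ * ‖e‖ := (apply_le_opNorm_mul_norm v.2 e.1).trans <|
    mul_le_mul (norm_snd_le v) (norm_fst_le e) (norm_nonneg _) (norm_nonneg _)
  have h₂ : e.2 v.1 ≤ ‖e‖ * ‖v‖ := (apply_le_opNorm_mul_norm e.2 v.1).trans <|
    mul_le_mul (norm_snd_le e) (norm_fst_le v) (norm_nonneg _) (norm_nonneg _)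
  have h₃ : coup X e ≤ ‖e‖ * ‖e‖ := (le_abs_self _).trans <| (abs_coup_le e).trans <|
    mul_le_mul (norm_fst_le e) (norm_snd_le e) (norm_nonneg _) (norm_nonneg _)
  rw [coup_add]
  linarith

lemma continuous_coup : Continuous (coup X) :=
  isBoundedBilinearMap_apply.continuous.comp continuous_swap

lemma continuous_hfun : Continuous (hfun X) := by
  unfold hfun
  fun_prop

lemma convexOn_hfun : ConvexOn ℝ univ (hfun X) :=
  (convexOn_half_sq_norm.comp_linearMap (LinearMap.fst ℝ X (StrongDual ℝ X))).add
    (convexOn_half_sq_norm.comp_linearMap (LinearMap.snd ℝ X (StrongDual ℝ X)))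

end Coupling

lemma EReal.sub_coe_add_coe_add_coe (x : EReal) (a b d : ℝ) :
    x - a + b + d = x - ↑(a - b - d) := by
  induction x using EReal.rec <;> norm_cast
  ring

lemma EReal.iInf_sub_coe_eq_zero_iff {ι : Type*} (a : ι → EReal) (r : ι → ℝ) :
    ⨅ i, (a i - r i) = 0 ↔
      (∀ i, (r i : EReal) ≤ a i) ∧ ∀ δ : ℝ, 0 < δ → ∃ i, a i < ↑(r i + δ) := by
  have hsub_nonneg (i : ι) : 0 ≤ a i - r i ↔ (r i : EReal) ≤ a i :=
    EReal.sub_nonneg (.inr (EReal.coe_ne_top _)) (.inr (EReal.coe_ne_bot _))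
  have hsub_lt (i : ι) (δ : ℝ) : a i - r i < δ ↔ a i < ↑(r i + δ) := by
    rw [EReal.sub_lt_iff (.inl (EReal.coe_ne_bot _)) (.inl (EReal.coe_ne_top _)), add_comm,
      EReal.coe_add]
  rw [le_antisymm_iff, and_comm, le_iInf_iff, ← EReal.le_of_forall_lt_iff_le]
  simp only [hsub_nonneg]
  refine and_congr_right' ⟨fun h δ hδ => ?_, fun h δ hδ => ?_⟩
  · obtain ⟨i, hi⟩ := iInf_lt_iff.1 ((h (δ / 2) (by exact_mod_cast half_pos hδ)).trans_lt
      (EReal.coe_lt_coe_iff.2 (half_lt_self hδ)))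
    exact ⟨i, (hsub_lt i δ).1 hi⟩
  · obtain ⟨i, hi⟩ := h δ (by exact_mod_cast hδ)
    exact iInf_le_of_le i ((hsub_lt i δ).2 hi).le

lemma Convex.epigraph_combo_le {E : Type*} [AddCommGroup E] [Module ℝ E] {f : E → EReal}
    (hconv : Convex ℝ {p : E × ℝ | f p.1 ≤ p.2}) {x y : E} {s t : ℝ} (hx : f x ≤ s)
    (hy : f y ≤ t) {a b : ℝ} (ha : 0 ≤ a) (hb : 0 ≤ b) (hab : a + b = 1) :
    f (a • x + b • y) ≤ ↑(a * s + b * t) :=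
  hconv (x := (x, s)) (y := (y, t)) hx hy ha hb hab

lemma LowerSemicontinuous.isClosed_setOf_le_coe {α : Type*} [TopologicalSpace α]
    {f : α → EReal} (hf : LowerSemicontinuous f) {g : α → ℝ} (hg : Continuous g) :
    IsClosed {x | f x ≤ g x} :=
  hf.isClosed_epigraph.preimage (continuous_id.prodMk (continuous_coe_real_ereal.comp hg))

lemma exists_tendsto_of_forall_exists_dist_le {α : Type*} [PseudoMetricSpace α]
    [CompleteSpace α] (P : ℕ → α → Prop) {C : ℝ} {x₀ : α} (h₀ : P 0 x₀)
    (hstep : ∀ n x, P n x → ∃ y, P (n + 1) y ∧ dist x y ≤ C * (1 / 2) ^ n) :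
    ∃ u : ℕ → α, (∀ n, P n (u n)) ∧ ∃ a, Tendsto u atTop (𝓝 a) ∧ dist x₀ a ≤ 2 * C := by
  choose next hnext using hstep
  let v : (n : ℕ) → {x // P n x} := fun n =>
    Nat.rec ⟨x₀, h₀⟩ (fun n x => ⟨next n x x.2, (hnext n x x.2).1⟩) n
  have hdist (n : ℕ) : dist (v n).1 (v (n + 1)).1 ≤ C * (1 / 2) ^ n := (hnext n _ (v n).2).2
  obtain ⟨a, ha⟩ :=
    cauchySeq_tendsto_of_complete (cauchySeq_of_le_geometric _ _ (by norm_num) hdist)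
  refine ⟨fun n => (v n).1, fun n => (v n).2, a, ha, ?_⟩
  calc dist x₀ a = dist (v 0).1 a := rfl
    _ ≤ C / (1 - 1 / 2) := dist_le_of_le_geometric_of_tendsto₀ _ _ (by norm_num) hdist ha
    _ = 2 * C := by norm_num [div_eq_mul_inv, mul_comm]

section Representative

variable {X : Type*} [NormedAddCommGroup X] [NormedSpace ℝ X] {f : X × StrongDual ℝ X → EReal}

/-- `f_z(w) + h(w)`. -/
def shiftAddH (f : X × StrongDual ℝ X → EReal) (z w : X × StrongDual ℝ X) : EReal :=
  f (z + w) - ((coup X (z + w) : ℝ) : EReal) + ((coup X w : ℝ) : EReal)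
    + ((hfun X w : ℝ) : EReal)

lemma iInf_shiftAddH_eq_zero_iff :
    (∀ z, ⨅ w, shiftAddH f z w = 0) ↔ (∀ z, (coup X z : EReal) ≤ f z) ∧
      ∀ z δ, 0 < δ → ∃ w, f (z + w) < ↑(coup X (z + w) - coup X w - hfun X w + δ) := by
  simp only [shiftAddH, EReal.sub_coe_add_coe_add_coe,
    EReal.iInf_sub_coe_eq_zero_iff (fun w => f (_ + w)), forall_and]
  refine and_congr_left' ⟨fun h z => by simpa [coup, hfun] using h z 0, fun h z w => ?_⟩
  exact (EReal.coe_le_coe_iff.2 (by linarith [neg_abs_le (coup X w), abs_coup_le_hfun w])).trans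
    (h (z + w))

lemma isMono_Mset (hconv : Convex ℝ {p : (X × StrongDual ℝ X) × ℝ | f p.1 ≤ p.2})
    (hfc : ∀ z, (coup X z : EReal) ≤ f z) : IsMono X (Mset X f) := by
  intro z hz w hw
  have hmid := hconv.epigraph_combo_le hz.le hw.le (a := 1 / 2) (b := 1 / 2) (by norm_num)
    (by norm_num) (by norm_num)
  have hle : coup X ((1 / 2 : ℝ) • (z + w)) ≤ 1 / 2 * coup X z + 1 / 2 * coup X w := by
    rw [smul_add]
    exact_mod_cast (hfc _).trans hmid
  rw [coup_smul] at hle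
  change 0 ≤ coup X (z - w)
  linarith [coup_add_add_coup_sub z w]

lemma exists_add_le_coup_add_of_le_coup_add
    (hconv : Convex ℝ {p : (X × StrongDual ℝ X) × ℝ | f p.1 ≤ p.2})
    (hfc : ∀ z, (coup X z : EReal) ≤ f z)
    (hgap : ∀ z δ, 0 < δ → ∃ w, f (z + w) < ↑(coup X (z + w) - coup X w - hfun X w + δ))
    {z : X × StrongDual ℝ X} {ε δ : ℝ} (hz : f z ≤ ↑(coup X z + ε)) (hδ : 0 < δ) :
    ∃ w, ‖w‖ ^ 2 ≤ 4 * (ε + δ) ∧ f (z + w) ≤ ↑(coup X (z + w) + δ) := by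
  obtain ⟨w, hw⟩ := hgap z δ hδ
  have hmid := hconv.epigraph_combo_le hz hw.le (a := 1 / 2) (b := 1 / 2) (by norm_num)
    (by norm_num) (by norm_num)
  rw [show (1 / 2 : ℝ) • z + (1 / 2 : ℝ) • (z + w) = z + (1 / 2 : ℝ) • w by module] at hmid
  have hle : coup X (z + (1 / 2 : ℝ) • w) ≤
      1 / 2 * (coup X z + ε) + 1 / 2 * (coup X (z + w) - coup X w - hfun X w + δ) := by
    exact_mod_cast (hfc _).trans hmid
  have hexp : coup X (z + (1 / 2 : ℝ) • w) =
      coup X z + 1 / 2 * (z.2 w.1 + w.2 z.1) + 1 / 4 * coup X w := by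
    rw [coup_add, coup_smul]
    simp only [Prod.smul_fst, Prod.smul_snd, map_smul, smul_apply, smul_eq_mul]
    ring
  rw [hexp, coup_add z w] at hle
  have hc := abs_le.1 (abs_coup_le_hfun w)
  refine ⟨w, by linarith [sq_norm_le_two_mul_hfun w], hw.le.trans ?_⟩
  exact_mod_cast (by linarith : coup X (z + w) - coup X w - hfun X w + δ ≤ coup X (z + w) + δ)

lemma exists_mem_Mset_dist_le [CompleteSpace X]
    (hconv : Convex ℝ {p : (X × StrongDual ℝ X) × ℝ | f p.1 ≤ p.2})
    (hlsc : LowerSemicontinuous f) (hfc : ∀ z, (coup X z : EReal) ≤ f z)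
    (hgap : ∀ z δ, 0 < δ → ∃ w, f (z + w) < ↑(coup X (z + w) - coup X w - hfun X w + δ))
    {z : X × StrongDual ℝ X} {ε : ℝ} (hε : 0 < ε) (hz : f z ≤ ↑(coup X z + ε)) :
    ∃ z' ∈ Mset X f, dist z z' ≤ 6 * √ε := by
  obtain ⟨u, hu, a, hua, hdist⟩ := exists_tendsto_of_forall_exists_dist_le
    (fun n x => f x ≤ ↑(coup X x + ε * (1 / 4) ^ n)) (C := 3 * √ε) (by simpa using hz)
    fun n x hx => by
      obtain ⟨w, hw, hfw⟩ := exists_add_le_coup_add_of_le_coup_add hconv hfc hgap hx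
        (δ := ε * (1 / 4) ^ (n + 1)) (by positivity)
      refine ⟨x + w, hfw, ?_⟩
      rw [dist_self_add_right, ← pow_le_pow_iff_left₀ (norm_nonneg _) (by positivity) two_ne_zero]
      have h4 : (1 / 4 : ℝ) ^ n = ((1 / 2) ^ n) ^ 2 := by
        rw [← pow_mul, mul_comm, pow_mul]
        norm_num
      rw [mul_pow, mul_pow, Real.sq_sqrt hε.le, ← h4]
      rw [pow_succ (1 / 4 : ℝ) n] at hw
      nlinarith [pow_nonneg (by norm_num : (0 : ℝ) ≤ 1 / 4) n]
  have hclosed : IsClosed {p : (X × StrongDual ℝ X) × ℝ | f p.1 ≤ ↑(coup X p.1 + p.2)} :=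
    (hlsc.comp continuous_fst).isClosed_setOf_le_coe
      ((continuous_coup.comp continuous_fst).add continuous_snd)
  have hlim : Tendsto (fun n => (u n, ε * (1 / 4 : ℝ) ^ n)) atTop (𝓝 (a, 0)) := by
    refine hua.prodMk_nhds ?_
    simpa using (tendsto_pow_atTop_nhds_zero_of_lt_one (by norm_num : (0 : ℝ) ≤ 1 / 4)
      (by norm_num)).const_mul ε
  have ha : f a ≤ ↑(coup X a + 0) := hclosed.mem_of_tendsto hlim (Eventually.of_forall hu)
  rw [add_zero] at ha
  exact ⟨a, le_antisymm ha (hfc a), by linarith⟩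

lemma exists_mem_Mset_dist_le_of_monotonicallyRelated [CompleteSpace X]
    (hconv : Convex ℝ {p : (X × StrongDual ℝ X) × ℝ | f p.1 ≤ p.2})
    (hlsc : LowerSemicontinuous f) (hfc : ∀ z, (coup X z : EReal) ≤ f z)
    (hgap : ∀ z δ, 0 < δ → ∃ w, f (z + w) < ↑(coup X (z + w) - coup X w - hfun X w + δ))
    {z₀ : X × StrongDual ℝ X} (hz₀ : ∀ z ∈ Mset X f, 0 ≤ (z₀.2 - z.2) (z₀.1 - z.1))
    {δ : ℝ} (hδ : 0 < δ) :
    ∃ z' ∈ Mset X f, dist z₀ z' ≤ 33 * √δ := by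
  obtain ⟨w, hw⟩ := hgap z₀ δ hδ
  have hsmall : coup X w + hfun X w < δ := by
    have := (hfc (z₀ + w)).trans_lt hw
    norm_cast at this
    linarith
  have hz : f (z₀ + w) ≤ ↑(coup X (z₀ + w) + δ) := hw.le.trans <| EReal.coe_le_coe_iff.2 <| by
    linarith [neg_abs_le (coup X w), abs_coup_le_hfun w]
  obtain ⟨z', hz', hdist⟩ := exists_mem_Mset_dist_le hconv hlsc hfc hgap hδ hz
  set e := z' - (z₀ + w) with he_def
  have he : ‖e‖ ≤ 6 * √δ := by rwa [dist_comm, dist_eq_norm] at hdist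
  have hmono : 0 ≤ coup X (w + e) := by
    rw [show w + e = -(z₀ - z') by rw [he_def]; abel, coup_neg]
    exact hz₀ z' hz'
  have hcross : ‖e‖ * (2 * ‖w‖ + ‖e‖) ≤ 6 * √δ * (2 * ‖w‖ + 6 * √δ) :=
    mul_le_mul he (by linarith) (by positivity) (by positivity)
  have hw_le : ‖w‖ ≤ 27 * √δ := by
    nlinarith [coup_add_le w e, sq_norm_le_two_mul_hfun w, Real.sq_sqrt hδ.le,
      Real.sqrt_nonneg δ, norm_nonneg w]
  refine ⟨z', hz', ?_⟩
  calc dist z₀ z' = ‖w + e‖ := by rw [dist_comm, dist_eq_norm, he_def]; congr 1; abel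
    _ ≤ ‖w‖ + ‖e‖ := norm_add_le w e
    _ ≤ 33 * √δ := by linarith

theorem isMaxMono_Mset [CompleteSpace X]
    (hconv : Convex ℝ {p : (X × StrongDual ℝ X) × ℝ | f p.1 ≤ p.2})
    (hlsc : LowerSemicontinuous f) (hinf : ∀ z, ⨅ w, shiftAddH f z w = 0) :
    IsMaxMono X (Mset X f) := by
  obtain ⟨hfc, hgap⟩ := iInf_shiftAddH_eq_zero_iff.1 hinf
  refine ⟨isMono_Mset hconv hfc, fun N hN hMN => Subset.antisymm (fun z₀ hz₀ => ?_) hMN⟩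
  have hclosure : z₀ ∈ closure (Mset X f) := by
    refine Metric.mem_closure_iff.2 fun ρ hρ => ?_
    obtain ⟨z', hz', hdist⟩ := exists_mem_Mset_dist_le_of_monotonicallyRelated hconv hlsc hfc
      hgap (fun z hz => hN z₀ hz₀ z (hMN hz)) (δ := (ρ / 34) ^ 2) (by positivity)
    refine ⟨z', hz', hdist.trans_lt ?_⟩
    rw [Real.sqrt_sq (by positivity)]
    linarith
  exact le_antisymm (closure_minimal (fun z hz => hz.le)
    (hlsc.isClosed_setOf_le_coe continuous_coup) hclosure) (hfc z₀)

end Representative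

section Separation

variable {V : Type*} [NormedAddCommGroup V] [NormedSpace ℝ V]

lemma exists_half_sq_norm_sub_lt (q : StrongDual ℝ V) {η : ℝ} (hη : 0 < η) :
    ∃ x, ‖q‖ ^ 2 / 2 - η < q x - ‖x‖ ^ 2 / 2 := by
  set r := ‖q‖ - η / (‖q‖ + 1)
  have hq := norm_nonneg q
  obtain ⟨x, hx1, hrx⟩ := q.exists_lt_apply_of_lt_opNorm (r := r)
    (sub_lt_self _ (by positivity))
  obtain ⟨y, hy1, hry⟩ : ∃ y, ‖y‖ ≤ 1 ∧ r < q y := by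
    rcases le_or_gt 0 (q x) with h | h
    · exact ⟨x, hx1.le, by rwa [Real.norm_eq_abs, abs_of_nonneg h] at hrx⟩
    · exact ⟨-x, by rw [norm_neg]; exact hx1.le, by
        rwa [Real.norm_eq_abs, abs_of_neg h, ← map_neg] at hrx⟩
  refine ⟨‖q‖ • y, ?_⟩
  rw [map_smul, smul_eq_mul, norm_smul, norm_norm]
  have hr : ‖q‖ ^ 2 - η < ‖q‖ * r := by
    have : ‖q‖ * (η / (‖q‖ + 1)) < η := by
      rw [mul_div_assoc', div_lt_iff₀ (by positivity)]
      nlinarith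
    nlinarith
  have hy : (‖q‖ * ‖y‖) ^ 2 ≤ ‖q‖ ^ 2 := by
    rw [mul_pow]
    exact mul_le_of_le_one_right (sq_nonneg _) (pow_le_one₀ (norm_nonneg y) hy1)
  nlinarith [mul_le_mul_of_nonneg_left hry.le hq]

lemma exists_dual_separating {k : V → ℝ} (hk : ConvexOn ℝ univ k) (hkc : Continuous k)
    {G : Set (V × ℝ)} (hG : Convex ℝ G) (hGne : G.Nonempty) {m : ℝ}
    (hm : ∀ p ∈ G, m ≤ p.2 + k p.1) :
    ∃ (ℓ : StrongDual ℝ V) (β : ℝ), (∀ w, ℓ w - k w + m ≤ β) ∧ ∀ p ∈ G, β ≤ ℓ p.1 + p.2 := by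
  set U : Set (V × ℝ) := {p | p.2 + k p.1 < m}
  have hUo : IsOpen U :=
    isOpen_lt (continuous_snd.add (hkc.comp continuous_fst)) continuous_const
  have hUc : Convex ℝ U := by
    simpa [U] using ((LinearMap.snd ℝ V ℝ).convexOn convex_univ).add
      (hk.comp_linearMap (LinearMap.fst ℝ V ℝ)) |>.convex_lt m
  have hdisj : Disjoint U G :=
    disjoint_left.2 fun p hpU hpG => (lt_irrefl _) (hpU.trans_le (hm p hpG))
  obtain ⟨φ, u, hφU, hφG⟩ := geometric_hahn_banach_open hUc hUo hG hdisj
  set s := φ (0, 1)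
  have hφ (w : V) (t : ℝ) : φ (w, t) = φ (w, 0) + t * s := by
    rw [← smul_eq_mul, ← map_smul, ← map_add]
    simp
  have hU (w : V) (τ : ℝ) (hτ : 0 < τ) : φ (w, 0) + (m - k w - τ) * s < u := by
    rw [← hφ]
    exact hφU _ (show m - k w - τ + k w < m by linarith)
  obtain ⟨⟨w₀, t₀⟩, hp₀⟩ := hGne
  have hs : 0 < s := by
    have h := (hU w₀ 1 one_pos).trans_le (hφG _ hp₀)
    rw [hφ w₀ t₀] at h
    refine pos_of_mul_neg_right (a := m - k w₀ - 1 - t₀) (by linarith) ?_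
    linarith [hm _ hp₀]
  refine ⟨s⁻¹ • φ.comp (.inl ℝ V ℝ), s⁻¹ * u, fun w => ?_, fun p hp => ?_⟩
  · have hU' : φ (w, 0) + (m - k w) * s ≤ u := le_of_forall_pos_lt_add fun ε hε => by
      have := hU w (ε / s) (by positivity)
      rw [sub_mul, div_mul_cancel₀ _ hs.ne'] at this
      linarith
    change s⁻¹ * φ (w, 0) - k w + m ≤ s⁻¹ * u
    calc s⁻¹ * φ (w, 0) - k w + m = s⁻¹ * (φ (w, 0) + (m - k w) * s) := by field_simp; ring
      _ ≤ s⁻¹ * u := mul_le_mul_of_nonneg_left hU' (inv_nonneg.2 hs.le)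
  · change s⁻¹ * u ≤ s⁻¹ * φ (p.1, 0) + p.2
    calc s⁻¹ * u ≤ s⁻¹ * φ (p.1, p.2) := mul_le_mul_of_nonneg_left (hφG p hp) (inv_nonneg.2 hs.le)
      _ = s⁻¹ * φ (p.1, 0) + p.2 := by rw [hφ]; field_simp

end Separation

section Conjugate

variable {X : Type*} [NormedAddCommGroup X] [NormedSpace ℝ X] {g : X × StrongDual ℝ X → EReal}

/-- The epigraph of `g_z`, where `g_z(w) = g(z + w) - c(z + w) + c(w)`. -/
def shiftEpigraph (g : X × StrongDual ℝ X → EReal) (z : X × StrongDual ℝ X) :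
    Set ((X × StrongDual ℝ X) × ℝ) :=
  {p | g (z + p.1) ≤ ↑(p.2 + coup X (z + p.1) - coup X p.1)}

lemma convex_shiftEpigraph (hconv : Convex ℝ {p : (X × StrongDual ℝ X) × ℝ | g p.1 ≤ p.2})
    (z : X × StrongDual ℝ X) : Convex ℝ (shiftEpigraph g z) := by
  intro p hp q hq a b ha hb hab
  have h := hconv.epigraph_combo_le hp hq ha hb hab
  have hpt : a • (z + p.1) + b • (z + q.1) = z + (a • p + b • q).1 := by
    rw [show a • (z + p.1) + b • (z + q.1) = (a + b) • z + (a • p.1 + b • q.1) by module, hab,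
      one_smul]
    rfl
  have hval : a * (p.2 + coup X (z + p.1) - coup X p.1) +
      b * (q.2 + coup X (z + q.1) - coup X q.1) =
      (a • p + b • q).2 + coup X (z + (a • p + b • q).1) - coup X (a • p + b • q).1 := by
    simp only [add_sub_assoc, coup_add_sub_coup, Prod.fst_add, Prod.snd_add, Prod.smul_fst,
      Prod.smul_snd, map_add, map_smul, add_apply, smul_apply, smul_eq_mul]
    linear_combination (coup X z) * hab
  rw [hpt, hval] at h
  exact h

lemma sub_mem_shiftEpigraph {v : X × StrongDual ℝ X} {t : ℝ} (hv : g v ≤ t)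
    (z : X × StrongDual ℝ X) :
    (v - z, t - coup X v + coup X (v - z)) ∈ shiftEpigraph g z := by
  change g (z + (v - z)) ≤
    ↑(t - coup X v + coup X (v - z) + coup X (z + (v - z)) - coup X (v - z))
  rw [add_sub_cancel]
  convert hv using 2
  ring

lemma conjF_le_of_forall_mem_shiftEpigraph {z : X × StrongDual ℝ X} {q₁ : StrongDual ℝ X}
    {q₂ : StrongDual ℝ (StrongDual ℝ X)} {β : ℝ}
    (h : ∀ p ∈ shiftEpigraph g z, β ≤ q₁ p.1.1 + q₂ p.1.2 + p.2) :
    conjF X g (z.2 - q₁, inclusionInDoubleDual ℝ X z.1 - q₂) ≤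
      ↑(coup X z - q₁ z.1 - q₂ z.2 - β) := by
  set B := coup X z - q₁ z.1 - q₂ z.2 - β
  refine iSup_le fun v => EReal.sub_le_of_le_add' ?_
  suffices hle : ↑(z.2 v.1 - q₁ v.1 + v.2 z.1 - q₂ v.2 - B) ≤ g v by
    calc _ = ((z.2 v.1 - q₁ v.1 + v.2 z.1 - q₂ v.2 - B : ℝ) : EReal) + B := by
          rw [← EReal.coe_add]
          simp only [sub_apply, dual_def]
          ring_nf
      _ ≤ g v + B := by gcongr
  refine EReal.le_of_forall_lt_iff_le.1 fun t ht => EReal.coe_le_coe_iff.2 ?_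
  have := h _ (sub_mem_shiftEpigraph ht.le z)
  simp only [coup, Prod.fst_sub, Prod.snd_sub, map_sub, sub_apply] at this
  linarith [show B = z.2 z.1 - q₁ z.1 - q₂ z.2 - β from rfl]

lemma exists_lt_of_le_conjF (hproper : ∃ z, g z ≠ ⊤)
    (hconv : Convex ℝ {p : (X × StrongDual ℝ X) × ℝ | g p.1 ≤ p.2})
    (hstar : ∀ p, (coupS X p : EReal) ≤ conjF X g p) (z : X × StrongDual ℝ X) {m : ℝ}
    (hm : 0 < m) : ∃ w, g (z + w) < ↑(coup X (z + w) - coup X w - hfun X w + m) := by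
  by_contra! hall
  have hG (p) (hp : p ∈ shiftEpigraph g z) : m ≤ p.2 + hfun X p.1 := by
    have := (hall p.1).trans hp
    norm_cast at this
    linarith
  obtain ⟨v, hv⟩ := hproper
  obtain ⟨ℓ, β, hℓU, hℓG⟩ := exists_dual_separating convexOn_hfun continuous_hfun
    (convex_shiftEpigraph hconv z) ⟨_, sub_mem_shiftEpigraph (EReal.le_coe_toReal hv) z⟩ hG
  set q₁ := ℓ.comp (.inl ℝ X (StrongDual ℝ X))
  set q₂ := ℓ.comp (.inr ℝ X (StrongDual ℝ X))
  have hℓ (w : X × StrongDual ℝ X) : ℓ w = q₁ w.1 + q₂ w.2 := (ℓ.comp_inl_add_comp_inr w).symm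
  have hlow : -q₂ q₁ < β := by
    -- `q₂ ∈ X**` need not be attained, but `-q₁ ∈ X*` is a legitimate second coordinate
    obtain ⟨x, hx⟩ := exists_half_sq_norm_sub_lt q₁ hm
    have := hℓU (x, -q₁)
    rw [hℓ] at this
    simp only [hfun, map_neg, norm_neg] at this
    linarith
  have hup : q₂ q₁ ≤ -β := by
    have h := (hstar _).trans
      (conjF_le_of_forall_mem_shiftEpigraph fun p hp => hℓ p.1 ▸ hℓG p hp)
    have hc : coupS X (z.2 - q₁, inclusionInDoubleDual ℝ X z.1 - q₂) =
        coup X z - q₁ z.1 - q₂ z.2 + q₂ q₁ := by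
      simp only [coupS, coup, sub_apply, map_sub, dual_def]
      ring
    rw [hc, EReal.coe_le_coe_iff] at h
    linarith
  linarith

end Conjugate

theorem stmt9_general {X : Type*} [NormedAddCommGroup X] [NormedSpace ℝ X] [CompleteSpace X]
    (f : X × StrongDual ℝ X → EReal)
    (hconv : Convex ℝ {p : (X × StrongDual ℝ X) × ℝ | f p.1 ≤ (p.2 : EReal)})
    (hlsc : LowerSemicontinuous f)
    (hinf : ∀ z : X × StrongDual ℝ X,
      (⨅ w : X × StrongDual ℝ X,
        (f (z + w) - ((coup X (z + w) : ℝ) : EReal) + ((coup X w : ℝ) : EReal)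
          + ((hfun X w : ℝ) : EReal))) = 0) :
    IsMaxMono X (Mset X f) ∧
    ∀ M : Set (X × StrongDual ℝ X), (∃ g, memGs X g ∧ M = Mset X g) → IsMaxMono X M := by
  refine ⟨isMaxMono_Mset hconv hlsc hinf, ?_⟩
  rintro M ⟨g, ⟨-, hproper, hconv, hgc, hstar, hlsc⟩, rfl⟩
  exact isMaxMono_Mset hconv hlsc <| iInf_shiftAddH_eq_zero_iff.2
    ⟨hgc, fun z _ hδ => exists_lt_of_le_conjF hproper hconv hstar z hδ⟩

/-- if `f : Z → ℝ ∪ {+∞}` is proper, convex, norm-lsc, and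
`inf_w (f_z(w) + h(w)) = 0` for every `z ∈ Z`, then `M_f` is maximal monotone.
In particular, every strongly representable operator is maximal monotone. -/
theorem stmt9 {X : Type*} [NormedAddCommGroup X] [NormedSpace ℝ X] [CompleteSpace X]
    (f : X × StrongDual ℝ X → EReal)
    (hne_bot : ∀ z, f z ≠ ⊥) (hproper : ∃ z, f z ≠ ⊤)
    (hconv : Convex ℝ {p : (X × StrongDual ℝ X) × ℝ | f p.1 ≤ (p.2 : EReal)})
    (hlsc : LowerSemicontinuous f)
    (hinf : ∀ z : X × StrongDual ℝ X,
      (⨅ w : X × StrongDual ℝ X,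
        (f (z + w) - ((coup X (z + w) : ℝ) : EReal) + ((coup X w : ℝ) : EReal)
          + ((hfun X w : ℝ) : EReal))) = 0) :
    IsMaxMono X (Mset X f) ∧
    ∀ M : Set (X × StrongDual ℝ X), (∃ g, memGs X g ∧ M = Mset X g) → IsMaxMono X M :=
  stmt9_general f hconv hlsc hinf
end
end

section
/- Let X and Y be real Hausdorff locally convex spaces with topological duals X* and Y*, and let F ⊆ (X × Y) × (X* × Y*) be maximal monotone for the coupling c((x,y),(x*,y*)) := ⟨x,x*⟩ + ⟨y,y*⟩. Then Pr_Y(dom φ_F) is contained in the closed affine hull of Pr_Y(F), where Pr_Y(F) := {y : ∃(x,x*,y*), (x,y,x*,y*) ∈ F} and Pr_Y(dom φ_F) := {y : ∃(x,x*,y*), φ_F(x,y,x*,y*) < +∞}. -/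
noncomputable section

variable {X Y : Type*}
  [AddCommGroup X] [Module ℝ X] [TopologicalSpace X] [IsTopologicalAddGroup X]
  [ContinuousSMul ℝ X] [LocallyConvexSpace ℝ X] [T2Space X]
  [AddCommGroup Y] [Module ℝ Y] [TopologicalSpace Y] [IsTopologicalAddGroup Y]
  [ContinuousSMul ℝ Y] [LocallyConvexSpace ℝ Y] [T2Space Y]

/-- The coupling `c((x,y),(x*,y*)) = ⟨x,x*⟩ + ⟨y,y*⟩` on `(X × Y) × (X* × Y*)`. -/
def coup2 (w : (X × Y) × ((X →L[ℝ] ℝ) × (Y →L[ℝ] ℝ))) : ℝ :=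
  w.2.1 w.1.1 + w.2.2 w.1.2

/-- The duality pairing `⟨z, w⟩ = ⟨x_z, w*⟩ + ⟨x_w, z*⟩` between two points of
`(X × Y) × (X* × Y*)`. -/
def pair2 (z w : (X × Y) × ((X →L[ℝ] ℝ) × (Y →L[ℝ] ℝ))) : ℝ :=
  w.2.1 z.1.1 + w.2.2 z.1.2 + z.2.1 w.1.1 + z.2.2 w.1.2

/-- Monotonicity for `F ⊆ (X × Y) × (X* × Y*)`. -/
def IsMono2 (F : Set ((X × Y) × ((X →L[ℝ] ℝ) × (Y →L[ℝ] ℝ)))) : Prop :=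
  ∀ p ∈ F, ∀ q ∈ F,
    0 ≤ (p.2.1 - q.2.1) (p.1.1 - q.1.1) + (p.2.2 - q.2.2) (p.1.2 - q.1.2)

/-- Maximal monotonicity. -/
def IsMaxMono2 (F : Set ((X × Y) × ((X →L[ℝ] ℝ) × (Y →L[ℝ] ℝ)))) : Prop :=
  IsMono2 F ∧ ∀ G, IsMono2 G → F ⊆ G → G = F

/-- The Fitzpatrick function of `F`. -/
def fitz2 (F : Set ((X × Y) × ((X →L[ℝ] ℝ) × (Y →L[ℝ] ℝ))))
    (z : (X × Y) × ((X →L[ℝ] ℝ) × (Y →L[ℝ] ℝ))) : EReal :=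
  ⨆ w : F, ((pair2 z (w : (X × Y) × ((X →L[ℝ] ℝ) × (Y →L[ℝ] ℝ)))
      - coup2 (w : (X × Y) × ((X →L[ℝ] ℝ) × (Y →L[ℝ] ℝ)) ) : ℝ) : EReal)

/-!
If `y ∉ cl aff Pr_Y(F)`, Hahn–Banach gives a continuous functional `f` bounded above on that
closed affine subspace with `f y` above the bound; being bounded on an affine subspace, `f` is
constant there, say `f ≡ f v₀` on `Pr_Y(F)`. Shifting the `Y*`-component of a point of `F` by `t • f`
then keeps it monotonically related to all of `F`, so by maximality it stays in `F` for every
`t : ℝ`. Along this family the Fitzpatrick function at any point above `y` grows like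
`t * (f y - f v₀)` with `f y > f v₀`, so it is `+∞`.
-/

theorem AffineSubspace.apply_eq_of_bddAbove_image {𝕜 E : Type*} [Field 𝕜] [LinearOrder 𝕜]
    [IsStrictOrderedRing 𝕜] [AddCommGroup E] [Module 𝕜 E] (f : E →ₗ[𝕜] 𝕜)
    {s : AffineSubspace 𝕜 E} (hf : BddAbove (f '' s)) {a b : E} (ha : a ∈ s) (hb : b ∈ s) :
    f a = f b := by
  by_contra hne
  obtain ⟨u, hu⟩ := hf
  have hδ : f b - f a ≠ 0 := sub_ne_zero.mpr (Ne.symm hne)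
  set t : 𝕜 := (u - f a + 1) / (f b - f a)
  have hmem : t • (b - a) + a ∈ s := by
    simpa [vsub_eq_sub, vadd_eq_add] using s.smul_vsub_vadd_mem t hb ha ha
  have hval : f (t • (b - a) + a) = u + 1 := by
    rw [map_add, map_smul, map_sub, smul_eq_mul, div_mul_cancel₀ _ hδ]
    ring
  have := hu ⟨_, hmem, hval⟩
  linarith

theorem exists_continuousLinearMap_eqOn_lt_of_notMem_closure_affineSpan {E : Type*}
    [AddCommGroup E] [Module ℝ E] [TopologicalSpace E] [IsTopologicalAddGroup E]
    [ContinuousSMul ℝ E] [LocallyConvexSpace ℝ E] {S : Set E} {y v : E}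
    (hy : y ∉ closure (affineSpan ℝ S : Set E)) (hv : v ∈ S) :
    ∃ f : E →L[ℝ] ℝ, (∀ b ∈ S, f b = f v) ∧ f v < f y := by
  obtain ⟨f, u, hfu, huy⟩ := geometric_hahn_banach_closed_point
    (affineSpan ℝ S).convex.closure isClosed_closure hy
  have hlt : ∀ b ∈ affineSpan ℝ S, f b < u := fun b hb => hfu b (subset_closure hb)
  have hbdd : BddAbove ((f : E →ₗ[ℝ] ℝ) '' (affineSpan ℝ S : Set E)) := by
    refine ⟨u, ?_⟩
    rintro _ ⟨b, hb, rfl⟩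
    exact (hlt b hb).le
  refine ⟨f, fun b hb => ?_, (hlt v (subset_affineSpan ℝ S hv)).trans huy⟩
  exact AffineSubspace.apply_eq_of_bddAbove_image (f : E →ₗ[ℝ] ℝ) hbdd
    (subset_affineSpan ℝ S hb) (subset_affineSpan ℝ S hv)

section MaximalMonotone

variable {X Y : Type*} [AddCommGroup X] [Module ℝ X] [TopologicalSpace X]
  [AddCommGroup Y] [Module ℝ Y] [TopologicalSpace Y]
  {F : Set ((X × Y) × ((X →L[ℝ] ℝ) × (Y →L[ℝ] ℝ)))}
  {q z w : (X × Y) × ((X →L[ℝ] ℝ) × (Y →L[ℝ] ℝ))}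

theorem IsMono2.insert (hF : IsMono2 F)
    (hq : ∀ p ∈ F, 0 ≤ (q.2.1 - p.2.1) (q.1.1 - p.1.1) + (q.2.2 - p.2.2) (q.1.2 - p.1.2)) :
    IsMono2 (insert q F) := by
  have hsym : ∀ p ∈ F,
      0 ≤ (p.2.1 - q.2.1) (p.1.1 - q.1.1) + (p.2.2 - q.2.2) (p.1.2 - q.1.2) := by
    intro p hp
    have := hq p hp
    simp only [_root_.sub_apply, map_sub] at this ⊢
    linarith
  rintro p (rfl | hp) p' (rfl | hp')
  · simp
  · exact hq p' hp'
  · exact hsym p hp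
  · exact hF p hp p' hp'

theorem IsMaxMono2.mem_of_forall (hF : IsMaxMono2 F)
    (hq : ∀ p ∈ F, 0 ≤ (q.2.1 - p.2.1) (q.1.1 - p.1.1) + (q.2.2 - p.2.2) (q.1.2 - p.1.2)) :
    q ∈ F := by
  rw [← hF.2 _ (hF.1.insert hq) (Set.subset_insert q F)]
  exact Set.mem_insert q F

theorem IsMaxMono2.nonempty (hF : IsMaxMono2 F) : F.Nonempty := by
  rcases F.eq_empty_or_nonempty with hempty | hne
  · exact ⟨0, hF.mem_of_forall (by simp [hempty])⟩
  · exact hne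

theorem IsMaxMono2.shift_mem (hF : IsMaxMono2 F) {p₀ : (X × Y) × ((X →L[ℝ] ℝ) × (Y →L[ℝ] ℝ))}
    (hp₀ : p₀ ∈ F) {f : Y →L[ℝ] ℝ} (hf : ∀ p ∈ F, f p.1.2 = f p₀.1.2) (t : ℝ) :
    (p₀.1, (p₀.2.1, p₀.2.2 + t • f)) ∈ F := by
  refine hF.mem_of_forall fun p hp => ?_
  have hshift : (p₀.2.1 - p.2.1) (p₀.1.1 - p.1.1) + (p₀.2.2 + t • f - p.2.2) (p₀.1.2 - p.1.2)
      = (p₀.2.1 - p.2.1) (p₀.1.1 - p.1.1) + (p₀.2.2 - p.2.2) (p₀.1.2 - p.1.2)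
        + t * (f p₀.1.2 - f p.1.2) := by
    simp only [_root_.sub_apply, _root_.add_apply, _root_.smul_apply, map_sub, smul_eq_mul]
    ring
  simpa [hshift, hf p hp] using hF.1 p₀ hp₀ p hp

theorem le_fitz2 (hw : w ∈ F) : ((pair2 z w - coup2 w : ℝ) : EReal) ≤ fitz2 F z :=
  le_iSup_of_le ⟨w, hw⟩ le_rfl

theorem exists_le_of_fitz2_ne_top (h : fitz2 F z ≠ ⊤) :
    ∃ r : ℝ, ∀ w ∈ F, pair2 z w - coup2 w ≤ r := by
  obtain ⟨r, hr, -⟩ := EReal.lt_iff_exists_real_btwn.1 (lt_top_iff_ne_top.2 h)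
  exact ⟨r, fun w hw => EReal.coe_le_coe_iff.1 ((le_fitz2 hw).trans hr.le)⟩

theorem pair2_sub_coup2_shift (f : Y →L[ℝ] ℝ) (t : ℝ) :
    pair2 z (w.1, (w.2.1, w.2.2 + t • f)) - coup2 (w.1, (w.2.1, w.2.2 + t • f))
      = pair2 z w - coup2 w + t * (f z.1.2 - f w.1.2) := by
  simp only [pair2, coup2, _root_.add_apply, _root_.smul_apply, smul_eq_mul]
  ring

end MaximalMonotone

/-- if `X, Y` are real Hausdorff locally convex spaces and
`F ⊆ (X × Y) × (X* × Y*)` is maximal monotone, then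
`Pr_Y(dom φ_F) ⊆ closed affine hull of Pr_Y(F)`. -/
theorem stmt13 (F : Set ((X × Y) × ((X →L[ℝ] ℝ) × (Y →L[ℝ] ℝ))))
    (hF : IsMaxMono2 F) :
    {y : Y | ∃ (x : X) (xs : X →L[ℝ] ℝ) (ys : Y →L[ℝ] ℝ),
        fitz2 F ((x, y), (xs, ys)) ≠ ⊤}
      ⊆ closure (affineSpan ℝ {y : Y | ∃ (x : X) (xs : X →L[ℝ] ℝ) (ys : Y →L[ℝ] ℝ),
          ((x, y), (xs, ys)) ∈ F} : Set Y) := by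
  rintro y ⟨x, xs, ys, hfin⟩
  by_contra hy
  obtain ⟨p₀, hp₀⟩ := hF.nonempty
  obtain ⟨f, hf_const, hf_lt⟩ :=
    exists_continuousLinearMap_eqOn_lt_of_notMem_closure_affineSpan hy ⟨_, _, _, hp₀⟩
  have hshift : ∀ t : ℝ, (p₀.1, (p₀.2.1, p₀.2.2 + t • f)) ∈ F :=
    hF.shift_mem hp₀ fun p hp => hf_const _ ⟨_, _, _, hp⟩
  obtain ⟨r, hr⟩ := exists_le_of_fitz2_ne_top hfin
  set z := ((x, y), (xs, ys))
  set C := pair2 z p₀ - coup2 p₀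
  have hgap : 0 < f y - f p₀.1.2 := sub_pos.2 hf_lt
  have hbound := hr _ (hshift ((r - C + 1) / (f y - f p₀.1.2)))
  rw [pair2_sub_coup2_shift, div_mul_cancel₀ _ hgap.ne'] at hbound
  linarith
end
end

section
/- Let M ⊆ X × X* be maximal monotone and of type NI, i.e., inf_{(u,u*) ∈ M} ⟨u* − x*, ĵu − x**⟩ ≤ 0 for every (x*, x**) ∈ X* × X** (equivalently, c_M*(x*,x**) ≥ ⟨x*,x**⟩ for all (x*,x**), where c_M*(x*,x**) := sup{⟨u,x*⟩ + ⟨u*,x**⟩ − ⟨u,u*⟩ : (u,u*) ∈ M}). Then M is strongly representable; indeed, the Fitzpatrick function φ_M is a strong representative of M. -/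
open NormedSpace

noncomputable section

/-- The Fitzpatrick function of `M ⊆ Z`. -/
def fitz (X : Type*) [NormedAddCommGroup X] [NormedSpace ℝ X]
    (M : Set (X × StrongDual ℝ X)) (z : X × StrongDual ℝ X) : EReal :=
  ⨆ w : M, (((w : X × StrongDual ℝ X).2 z.1 + z.2 (w : X × StrongDual ℝ X).1
      - (w : X × StrongDual ℝ X).2 (w : X × StrongDual ℝ X).1 : ℝ) : EReal)

/-!
Maximality turns the Fitzpatrick inequalities into membership: a point `z` with
`φ_M z ≤ c z` is monotonically related to all of `M`, hence lies in `M`. This gives both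
`φ_M ≥ c` and `M_{φ_M} = M`; convexity and lower semicontinuity hold because `φ_M` is a supremum
of continuous affine functions. The NI condition enters only through the conjugate: evaluating
`φ_M*` at points of `M`, where `φ_M = c`, gives `φ_M*(x*, x**) ≥ ⟨x*, x**⟩ - ⟨u* - x*, ĵu - x**⟩`,
and NI makes the correction term arbitrarily small.
-/

lemma EReal.coe_le_of_forall_pos_sub_le {a : ℝ} {x : EReal}
    (h : ∀ δ : ℝ, 0 < δ → ((a - δ : ℝ) : EReal) ≤ x) : (a : EReal) ≤ x := by
  refine le_of_forall_lt_imp_le_of_dense fun c hc => ?_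
  obtain ⟨r, hcr, hra⟩ := EReal.lt_iff_exists_real_btwn.1 hc
  have hδ : 0 < a - r := _root_.sub_pos.2 (EReal.coe_lt_coe_iff.1 hra)
  calc c ≤ (r : EReal) := hcr.le
    _ = ((a - (a - r) : ℝ) : EReal) := by rw [sub_sub_cancel]
    _ ≤ x := h _ hδ

namespace Fitzpatrick

variable {X : Type*} [NormedAddCommGroup X] [NormedSpace ℝ X]

def affineTerm (w z : X × StrongDual ℝ X) : ℝ := w.2 z.1 + z.2 w.1 - w.2 w.1

lemma fitz_eq_iSup_affineTerm (M : Set (X × StrongDual ℝ X)) (z : X × StrongDual ℝ X) :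
    fitz X M z = ⨆ w : M, (affineTerm w z : EReal) := rfl

lemma affineTerm_le_fitz {M : Set (X × StrongDual ℝ X)} {w : X × StrongDual ℝ X} (hw : w ∈ M)
    (z : X × StrongDual ℝ X) : (affineTerm w z : EReal) ≤ fitz X M z :=
  le_iSup (fun w : M => (affineTerm (w : X × StrongDual ℝ X) z : EReal)) ⟨w, hw⟩

lemma fitz_le_iff {M : Set (X × StrongDual ℝ X)} {z : X × StrongDual ℝ X} {r : EReal} :
    fitz X M z ≤ r ↔ ∀ w ∈ M, (affineTerm w z : EReal) ≤ r := by
  simp only [fitz_eq_iSup_affineTerm, iSup_le_iff, Subtype.forall]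

lemma sub_apply_sub_eq_coup_sub_affineTerm (z w : X × StrongDual ℝ X) :
    (z.2 - w.2) (z.1 - w.1) = coup X z - affineTerm w z := by
  simp only [sub_apply, map_sub, coup, affineTerm]
  ring

lemma affineTerm_le_coup_iff {z w : X × StrongDual ℝ X} :
    affineTerm w z ≤ coup X z ↔ 0 ≤ (z.2 - w.2) (z.1 - w.1) := by
  rw [sub_apply_sub_eq_coup_sub_affineTerm, sub_nonneg]

lemma affineTerm_self (w : X × StrongDual ℝ X) : affineTerm w w = coup X w := by
  simp only [affineTerm, coup, add_sub_cancel_right]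

lemma affineTerm_smul_add_smul (w : X × StrongDual ℝ X) {p q : X × StrongDual ℝ X} {a b : ℝ}
    (hab : a + b = 1) :
    affineTerm w (a • p + b • q) = a * affineTerm w p + b * affineTerm w q := by
  simp only [affineTerm, Prod.fst_add, Prod.snd_add, Prod.smul_fst, Prod.smul_snd, map_add,
    map_smul, add_apply, smul_apply, smul_eq_mul]
  linear_combination (w.2 w.1) * hab

lemma continuous_affineTerm (w : X × StrongDual ℝ X) : Continuous (affineTerm w) :=
  ((w.2.continuous.comp continuous_fst).add
    ((ContinuousLinearMap.apply ℝ ℝ w.1).continuous.comp continuous_snd)).sub continuous_const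

lemma convex_epigraph_fitz (M : Set (X × StrongDual ℝ X)) :
    Convex ℝ {p : (X × StrongDual ℝ X) × ℝ | fitz X M p.1 ≤ (p.2 : EReal)} := by
  rintro p hp q hq a b ha hb hab
  simp only [Set.mem_ofPred_eq, fitz_le_iff, EReal.coe_le_coe_iff] at hp hq ⊢
  intro w hw
  simp only [Prod.fst_add, Prod.snd_add, Prod.smul_fst, Prod.smul_snd, smul_eq_mul,
    affineTerm_smul_add_smul w hab]
  exact add_le_add (mul_le_mul_of_nonneg_left (hp w hw) ha)
    (mul_le_mul_of_nonneg_left (hq w hw) hb)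

lemma lowerSemicontinuous_fitz (M : Set (X × StrongDual ℝ X)) :
    LowerSemicontinuous (fitz X M) :=
  lowerSemicontinuous_iSup fun w => (continuous_coe_real_ereal.comp
    (continuous_affineTerm (w : X × StrongDual ℝ X))).lowerSemicontinuous

lemma fitz_eq_coup_of_mem {M : Set (X × StrongDual ℝ X)} (hM : IsMono X M)
    {z : X × StrongDual ℝ X} (hz : z ∈ M) : fitz X M z = (coup X z : EReal) := by
  refine le_antisymm (fitz_le_iff.2 fun w hw => ?_) ?_
  · exact EReal.coe_le_coe_iff.2 (affineTerm_le_coup_iff.2 (hM z hz w hw))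
  · simpa only [affineTerm_self] using affineTerm_le_fitz hz z

lemma coupS_sub_le_conjF_fitz {M : Set (X × StrongDual ℝ X)} (hM : IsMono X M)
    (p : StrongDual ℝ X × StrongDual ℝ (StrongDual ℝ X)) {w : X × StrongDual ℝ X} (hw : w ∈ M) :
    ((coupS X p - (inclusionInDoubleDual ℝ X w.1 - p.2) (w.2 - p.1) : ℝ) : EReal)
      ≤ conjF X (fitz X M) p := by
  have hsup : ((p.1 w.1 + p.2 w.2 : ℝ) : EReal) - fitz X M w ≤ conjF X (fitz X M) p :=
    le_iSup (fun z : X × StrongDual ℝ X => ((p.1 z.1 + p.2 z.2 : ℝ) : EReal) - fitz X M z) w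
  rw [fitz_eq_coup_of_mem hM hw, ← EReal.coe_sub] at hsup
  refine le_trans (le_of_eq ?_) hsup
  congr 1
  simp only [coupS, coup, sub_apply, map_sub, dual_def]
  ring

lemma coupS_le_conjF_fitz {M : Set (X × StrongDual ℝ X)} (hM : IsMono X M)
    (hNI : ∀ (xs : StrongDual ℝ X) (xss : StrongDual ℝ (StrongDual ℝ X)), ∀ δ : ℝ, 0 < δ →
      ∃ w ∈ M, (inclusionInDoubleDual ℝ X w.1 - xss) (w.2 - xs) < δ)
    (p : StrongDual ℝ X × StrongDual ℝ (StrongDual ℝ X)) :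
    (coupS X p : EReal) ≤ conjF X (fitz X M) p := by
  refine EReal.coe_le_of_forall_pos_sub_le fun δ hδ => ?_
  obtain ⟨w, hw, hwδ⟩ := hNI p.1 p.2 δ hδ
  exact le_trans (EReal.coe_le_coe_iff.2 (by linarith)) (coupS_sub_le_conjF_fitz hM p hw)

end Fitzpatrick

namespace IsMaxMono

open Fitzpatrick

variable {X : Type*} [NormedAddCommGroup X] [NormedSpace ℝ X] {M : Set (X × StrongDual ℝ X)}

lemma mem_of_forall_monotonically_related (hM : IsMaxMono X M) {z : X × StrongDual ℝ X}
    (hz : ∀ w ∈ M, 0 ≤ (z.2 - w.2) (z.1 - w.1)) : z ∈ M := by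
  have hmono : IsMono X (insert z M) := by
    rintro a (rfl | ha) b (rfl | hb)
    · simp
    · exact hz b hb
    · rw [← neg_sub b.2 a.2, ← neg_sub b.1 a.1, map_neg, neg_apply, neg_neg]
      exact hz a ha
    · exact hM.1 a ha b hb
  rw [← hM.2 _ hmono (Set.subset_insert z M)]
  exact Set.mem_insert z M

lemma mem_of_fitz_le_coup (hM : IsMaxMono X M) {z : X × StrongDual ℝ X}
    (hz : fitz X M z ≤ (coup X z : EReal)) : z ∈ M :=
  hM.mem_of_forall_monotonically_related fun _ hw =>
    affineTerm_le_coup_iff.1 (EReal.coe_le_coe_iff.1 ((affineTerm_le_fitz hw z).trans hz))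

lemma coup_le_fitz (hM : IsMaxMono X M) (z : X × StrongDual ℝ X) :
    (coup X z : EReal) ≤ fitz X M z := by
  by_contra! h
  have hz := hM.mem_of_fitz_le_coup h.le
  exact h.ne (fitz_eq_coup_of_mem hM.1 hz)

lemma mset_fitz (hM : IsMaxMono X M) : Mset X (fitz X M) = M :=
  Set.ext fun _ => ⟨fun hz => hM.mem_of_fitz_le_coup (le_of_eq hz), fitz_eq_coup_of_mem hM.1⟩

end IsMaxMono

theorem stmt18_general {X : Type*} [NormedAddCommGroup X] [NormedSpace ℝ X]
    (M : Set (X × StrongDual ℝ X)) (hM : IsMaxMono X M)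
    (hNI : ∀ (xs : StrongDual ℝ X) (xss : StrongDual ℝ (StrongDual ℝ X)), ∀ δ : ℝ, 0 < δ →
      ∃ w ∈ M, (inclusionInDoubleDual ℝ X w.1 - xss) (w.2 - xs) < δ) :
    (∃ f, memGs X f ∧ M = Mset X f) ∧
    memGs X (fitz X M) ∧ M = Mset X (fitz X M) := by
  obtain ⟨w₀, hw₀, -⟩ := hNI 0 0 1 one_pos
  have hGs : memGs X (fitz X M) :=
    ⟨fun z => ne_bot_of_le_ne_bot (EReal.coe_ne_bot _) (hM.coup_le_fitz z),
      ⟨w₀, by rw [Fitzpatrick.fitz_eq_coup_of_mem hM.1 hw₀]; exact EReal.coe_ne_top _⟩,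
      Fitzpatrick.convex_epigraph_fitz M, hM.coup_le_fitz,
      Fitzpatrick.coupS_le_conjF_fitz hM.1 hNI, Fitzpatrick.lowerSemicontinuous_fitz M⟩
  exact ⟨⟨fitz X M, hGs, hM.mset_fitz.symm⟩, hGs, hM.mset_fitz.symm⟩

/-- every maximal monotone operator `M` of type NI
(`inf_{(u,u*) ∈ M} ⟨u* - x*, ĵu - x**⟩ ≤ 0` for all `(x*, x**) ∈ X* × X**`) is strongly
representable, and the Fitzpatrick function `φ_M` is a strong representative of `M`. -/
theorem stmt18 {X : Type*} [NormedAddCommGroup X] [NormedSpace ℝ X] [CompleteSpace X]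
    (M : Set (X × StrongDual ℝ X)) (hM : IsMaxMono X M)
    (hNI : ∀ (xs : StrongDual ℝ X) (xss : StrongDual ℝ (StrongDual ℝ X)), ∀ δ : ℝ, 0 < δ →
      ∃ w ∈ M, (inclusionInDoubleDual ℝ X w.1 - xss) (w.2 - xs) < δ) :
    (∃ f, memGs X f ∧ M = Mset X f) ∧
    memGs X (fitz X M) ∧ M = Mset X (fitz X M) :=
  stmt18_general M hM hNI
end
end
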